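/- Let I be an ideal of a graded graph Γ and φ an indecomposable finite or semifinite harmonic function on Γ that does not vanish identically on I. Then for every vertex λ ∈ Γ: φ(λ) = lim_{N→∞} Σ_{μ∈I, |μ|=N} dim(λ,μ)φ(μ). -/

import Mathlib

open Filter Topology ENNReal
open scoped Classical

noncomputable section

structure GradedGraph where
  V : Type
  lvl : V → ℕ
  levelFinite : ∀ n : ℕ, {v : V | lvl v = n}.Finite
  k : V → V → ℝ
  k_nonneg : ∀ a b, 0 ≤ k a b
  k_grade : ∀ a b, k a b ≠ 0 → lvl b = lvl a + 1
  exists_up : ∀ a, ∃ b, 0 < k a b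

namespace GradedGraph

variable (G : GradedGraph)

/-- The edge relation `λ ↗ μ`. -/
def Adj (a b : G.V) : Prop := 0 < G.k a b

/-- The path order: `a ≤ b` iff there is a (possibly empty) path from `a` to `b`. -/
def Le : G.V → G.V → Prop := Relation.ReflTransGen G.Adj

/-- `dimAux n a b` : weighted number of paths of length `n` from `a` to `b`. -/
def dimAux : ℕ → G.V → G.V → ℝ
  | 0, a, b => if a = b then 1 else 0
  | n + 1, a, b => ∑ᶠ c, dimAux n a c * G.k c b

/-- The shifted dimension `dim(a,b)`: weighted number of paths from `a` to `b`. -/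
def dim (a b : G.V) : ℝ := G.dimAux (G.lvl b - G.lvl a) a b

def IsIdeal (I : Set G.V) : Prop := ∀ a ∈ I, ∀ b, G.Le a b → b ∈ I

def IsCoideal (J : Set G.V) : Prop := ∀ a ∈ J, ∀ b, G.Le b a → b ∈ J

def IsSaturatedIdeal (I : Set G.V) : Prop :=
  G.IsIdeal I ∧ ∀ a, (∀ b, G.Adj a b → b ∈ I) → a ∈ I

def IsSaturatedCoideal (J : Set G.V) : Prop :=
  G.IsCoideal J ∧ ∀ a ∈ J, ∃ b ∈ J, G.Adj a b

def IsPrimitiveCoideal (J : Set G.V) : Prop :=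
  G.IsSaturatedCoideal J ∧ ∀ J1 J2 : Set G.V, G.IsSaturatedCoideal J1 →
    G.IsSaturatedCoideal J2 → J = J1 ∪ J2 → J = J1 ∨ J = J2

/-- A harmonic function `φ : Γ → ℝ≥0 ∪ {+∞}`. -/
def Harmonic (φ : G.V → ℝ≥0∞) : Prop :=
  ∀ a, φ a = ∑ᶠ b, ENNReal.ofReal (G.k a b) * φ b

/-- The submodule of relations `λ = Σ_{μ : λ↗μ} κ(λ,μ)·μ` in the free module on vertices. -/
def relSub : Submodule ℝ (G.V →₀ ℝ) :=
  Submodule.span ℝ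
    {x | ∃ a : G.V, x = Finsupp.single a 1 - ∑ᶠ b, G.k a b • Finsupp.single b (1 : ℝ)}

/-- The group `K_0(Γ)`. -/
abbrev K0 := (G.V →₀ ℝ) ⧸ G.relSub

def toK0 : (G.V →₀ ℝ) →ₗ[ℝ] G.K0 := G.relSub.mkQ

/-- The class of a vertex in `K_0(Γ)`. -/
def vtx (a : G.V) : G.K0 := G.toK0 (Finsupp.single a 1)

/-- The positive cone `K_0^+(Γ)` generated by the vertices. -/
def cone : Set G.K0 := {x | ∃ c : G.V →₀ ℝ, (∀ a, 0 ≤ c a) ∧ x = G.toK0 c}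

/-- The partial order `x ≤_K y` defined by the cone. -/
def leK (x y : G.K0) : Prop := y - x ∈ G.cone

/-- The value of (the `ℝ≥0`-linear extension of) `φ` on a nonnegative element of the
free module on vertices. -/
def evalC (φ : G.V → ℝ≥0∞) (c : G.V →₀ ℝ) : ℝ≥0∞ :=
  ∑ a ∈ c.support, ENNReal.ofReal (c a) * φ a

/-- A semifinite harmonic function: it is harmonic, not everywhere finite, and its value
on any element of the cone is the supremum of its finite values on smaller cone elements
(stated on nonnegative representatives). -/
def Semifinite (φ : G.V → ℝ≥0∞) : Prop :=
  G.Harmonic φ ∧ (∃ a, φ a = ⊤) ∧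
    ∀ c : G.V →₀ ℝ, (∀ a, 0 ≤ c a) →
      G.evalC φ c = ⨆ d : {d : G.V →₀ ℝ //
        (∀ a, 0 ≤ d a) ∧ G.leK (G.toK0 d) (G.toK0 c) ∧ G.evalC φ d ≠ ⊤},
          G.evalC φ d.1

/-- A finite or semifinite harmonic function. -/
def FinOrSemifinite (φ : G.V → ℝ≥0∞) : Prop :=
  (G.Harmonic φ ∧ ∀ a, φ a ≠ ⊤) ∨ G.Semifinite φ

/-- An indecomposable (finite or semifinite, not identically zero) harmonic function:
any finite or semifinite harmonic `ψ ≤ φ` not vanishing identically on the finiteness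
ideal of `φ` is proportional to `φ` on the finiteness ideal of `φ`. -/
def Indecomposable (φ : G.V → ℝ≥0∞) : Prop :=
  G.FinOrSemifinite φ ∧ (∃ a, φ a ≠ 0) ∧
    ∀ ψ : G.V → ℝ≥0∞, G.FinOrSemifinite ψ → (∀ a, ψ a ≤ φ a) →
      (∃ a, φ a ≠ ⊤ ∧ ψ a ≠ 0) →
        ∃ C : ℝ≥0∞, ∀ a, φ a ≠ ⊤ → ψ a = C * φ a

end GradedGraph

structure BranchingGraph extends GradedGraph where
  root : V
  root_lvl : lvl root = 0
  root_unique : ∀ v, lvl v = 0 → v = root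
  exists_down : ∀ v, lvl v ≠ 0 → ∃ u, 0 < k u v

end

noncomputable section AuxProof

namespace GradedGraph

variable {G : GradedGraph}

/-- The finset of vertices at level `N`. -/
def lvlF (G : GradedGraph) (N : ℕ) : Finset G.V := (G.levelFinite N).toFinset

lemma mem_lvlF {N : ℕ} {v : G.V} : v ∈ G.lvlF N ↔ G.lvl v = N := by
  simp [lvlF, Set.Finite.mem_toFinset]

lemma adj_of_ne {a b : G.V} (h : G.k a b ≠ 0) : G.Adj a b :=
  lt_of_le_of_ne (G.k_nonneg a b) (Ne.symm h)

lemma k_eq_zero {a b : G.V} (h : G.lvl b ≠ G.lvl a + 1) : G.k a b = 0 := by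
  by_contra hk; exact h (G.k_grade a b hk)

lemma dimAux_zero_apply (a b : G.V) : G.dimAux 0 a b = if a = b then 1 else 0 := rfl

lemma dimAux_succ_eq (n : ℕ) (a b : G.V) :
    G.dimAux (n + 1) a b = ∑ᶠ c, G.dimAux n a c * G.k c b := rfl

lemma dimAux_zero_self (a : G.V) : G.dimAux 0 a a = 1 := by
  rw [dimAux_zero_apply, if_pos rfl]

lemma dimAux_zero_ne {a b : G.V} (h : a ≠ b) : G.dimAux 0 a b = 0 := by
  rw [dimAux_zero_apply, if_neg h]

lemma dimAux_nonneg : ∀ (n : ℕ) (a b : G.V), 0 ≤ G.dimAux n a b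
  | 0, a, b => by rw [dimAux_zero_apply]; split <;> norm_num
  | n + 1, a, b => by
      rw [dimAux_succ_eq]
      exact finsum_nonneg fun c => mul_nonneg (dimAux_nonneg n a c) (G.k_nonneg c b)

lemma dimAux_lvl : ∀ (n : ℕ) {a b : G.V}, G.dimAux n a b ≠ 0 → G.lvl b = G.lvl a + n
  | 0, a, b, h => by
      rcases eq_or_ne a b with rfl | hne
      · simp
      · exact absurd (dimAux_zero_ne hne) h
  | n + 1, a, b, h => by
      rw [dimAux_succ_eq] at h
      have : ∃ c, G.dimAux n a c * G.k c b ≠ 0 := by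
        by_contra hc
        push_neg at hc
        exact h (by rw [funext hc]; exact finsum_zero)
      obtain ⟨c, hc⟩ := this
      have h1 : G.dimAux n a c ≠ 0 := fun h' => hc (by rw [h', zero_mul])
      have h2 : G.k c b ≠ 0 := fun h' => hc (by rw [h', mul_zero])
      have := dimAux_lvl n h1
      rw [G.k_grade c b h2, this]; omega

lemma dimAux_succ_sum (n : ℕ) (a b : G.V) :
    G.dimAux (n + 1) a b = ∑ c ∈ G.lvlF (G.lvl a + n), G.dimAux n a c * G.k c b := by
  rw [dimAux_succ_eq]
  apply finsum_eq_finset_sum_of_support_subset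
  intro c hc
  have h1 : G.dimAux n a c ≠ 0 := fun h' => by simp [h'] at hc
  exact Finset.mem_coe.mpr (mem_lvlF.mpr (dimAux_lvl n h1))

lemma dimAux_succ_left : ∀ (n : ℕ) (a b : G.V),
    G.dimAux (n + 1) a b = ∑ c ∈ G.lvlF (G.lvl a + 1), G.k a c * G.dimAux n c b := by
  intro n
  induction n with
  | zero =>
    intro a b
    rw [dimAux_succ_sum]
    rw [Finset.sum_eq_single_of_mem a (mem_lvlF.mpr (by simp))]
    · rw [dimAux_zero_self, one_mul]
      by_cases hb : G.lvl b = G.lvl a + 1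
      · rw [Finset.sum_eq_single_of_mem b (mem_lvlF.mpr hb)]
        · rw [dimAux_zero_self, mul_one]
        · intro c hc hcb
          rw [dimAux_zero_ne hcb, mul_zero]
      · rw [k_eq_zero hb]
        symm
        apply Finset.sum_eq_zero
        intro c hc
        have : c ≠ b := by
          intro h; exact hb (by rw [← h]; exact mem_lvlF.mp hc)
        rw [dimAux_zero_ne this, mul_zero]
    · intro c hc hca
      rw [dimAux_zero_ne (Ne.symm hca), zero_mul]
  | succ n ih =>
    intro a b
    rw [dimAux_succ_sum (n + 1) a b]
    have step1 : ∀ c ∈ G.lvlF (G.lvl a + (n + 1)),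
        G.dimAux (n + 1) a c * G.k c b
          = ∑ e ∈ G.lvlF (G.lvl a + 1), G.k a e * G.dimAux n e c * G.k c b := by
      intro c _
      rw [ih a c, Finset.sum_mul]
    rw [Finset.sum_congr rfl step1, Finset.sum_comm]
    apply Finset.sum_congr rfl
    intro e he
    have hle : G.lvl e = G.lvl a + 1 := mem_lvlF.mp he
    have : ∑ c ∈ G.lvlF (G.lvl a + (n + 1)), G.k a e * G.dimAux n e c * G.k c b
        = G.k a e * ∑ c ∈ G.lvlF (G.lvl e + n), G.dimAux n e c * G.k c b := by
      rw [Finset.mul_sum]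
      apply Finset.sum_congr (by rw [hle]; ring_nf) fun c _ => by ring
    rw [this, ← dimAux_succ_sum]

lemma dimAux_Le : ∀ (n : ℕ) {a b : G.V}, G.dimAux n a b ≠ 0 → G.Le a b
  | 0, a, b, h => by
      rcases eq_or_ne a b with rfl | hne
      · exact Relation.ReflTransGen.refl
      · exact absurd (dimAux_zero_ne hne) h
  | n + 1, a, b, h => by
      rw [dimAux_succ_left] at h
      obtain ⟨c, _, hc⟩ := Finset.exists_ne_zero_of_sum_ne_zero h
      have h1 : G.k a c ≠ 0 := fun h' => hc (by rw [h', zero_mul])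
      have h2 : G.dimAux n c b ≠ 0 := fun h' => hc (by rw [h', mul_zero])
      exact Relation.ReflTransGen.head (adj_of_ne h1) (dimAux_Le n h2)

lemma dim_eq_dimAux {lam μ : G.V} {m : ℕ} (h : G.lvl μ = G.lvl lam + m) :
    G.dim lam μ = G.dimAux m lam μ := by
  rw [GradedGraph.dim, h]
  congr 1
  omega

/-- Harmonicity as a finite sum over the next level. -/
lemma harmonic_sum (θ : G.V → ℝ≥0∞) (hθ : G.Harmonic θ) (a : G.V) :
    θ a = ∑ b ∈ G.lvlF (G.lvl a + 1), ENNReal.ofReal (G.k a b) * θ b := by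
  rw [hθ a]
  apply finsum_eq_finset_sum_of_support_subset
  intro b hb
  apply Finset.mem_coe.mpr
  apply mem_lvlF.mpr
  apply G.k_grade a b
  intro h0
  apply hb
  simp [h0]

end GradedGraph

end AuxProof

noncomputable section AuxProof2

namespace GradedGraph

variable {G : GradedGraph}

/-- Full-level sum of dim against a harmonic function reproduces the value. -/
lemma tfull (θ : G.V → ℝ≥0∞) (hθ : G.Harmonic θ) (lam : G.V) :
    ∀ m : ℕ, ∑ μ ∈ G.lvlF (G.lvl lam + m), ENNReal.ofReal (G.dim lam μ) * θ μ = θ lam := by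
  intro m
  induction m with
  | zero =>
    rw [Finset.sum_eq_single_of_mem lam (mem_lvlF.mpr (by simp))]
    · rw [dim_eq_dimAux (m := 0) (by simp), dimAux_zero_self, ENNReal.ofReal_one, one_mul]
    · intro μ hμ hne
      rw [dim_eq_dimAux (m := 0) (by simpa using mem_lvlF.mp hμ), dimAux_zero_ne (Ne.symm hne),
        ENNReal.ofReal_zero, zero_mul]
  | succ m ih =>
    have key : ∀ μ ∈ G.lvlF (G.lvl lam + (m + 1)),
        ENNReal.ofReal (G.dim lam μ) * θ μ
          = ∑ c ∈ G.lvlF (G.lvl lam + m),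
              ENNReal.ofReal (G.dimAux m lam c) * (ENNReal.ofReal (G.k c μ) * θ μ) := by
      intro μ hμ
      rw [dim_eq_dimAux (mem_lvlF.mp hμ), dimAux_succ_sum,
        ENNReal.ofReal_sum_of_nonneg fun c _ =>
          mul_nonneg (dimAux_nonneg m lam c) (G.k_nonneg c μ), Finset.sum_mul]
      apply Finset.sum_congr rfl
      intro c _
      rw [ENNReal.ofReal_mul (dimAux_nonneg m lam c), mul_assoc]
    rw [Finset.sum_congr rfl key, Finset.sum_comm]
    have key2 : ∀ c ∈ G.lvlF (G.lvl lam + m),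
        (∑ μ ∈ G.lvlF (G.lvl lam + (m + 1)),
            ENNReal.ofReal (G.dimAux m lam c) * (ENNReal.ofReal (G.k c μ) * θ μ))
          = ENNReal.ofReal (G.dim lam c) * θ c := by
      intro c hc
      rw [← Finset.mul_sum]
      have hlvl : G.lvl lam + (m + 1) = G.lvl c + 1 := by
        have := mem_lvlF.mp hc; omega
      rw [hlvl, ← harmonic_sum θ hθ c, dim_eq_dimAux (mem_lvlF.mp hc)]
    rw [Finset.sum_congr rfl key2, ih]

/-- The level-`N` partial sums over the ideal. -/
def SN (G : GradedGraph) (I : Set G.V) (φ : G.V → ℝ≥0∞) (N : ℕ) (lam : G.V) : ℝ≥0∞ :=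
  ∑ μ ∈ (G.lvlF N).filter (· ∈ I), ENNReal.ofReal (G.dim lam μ) * φ μ

lemma SN_eq (I : Set G.V) (φ : G.V → ℝ≥0∞) (N : ℕ) (lam : G.V) :
    (∑ᶠ μ ∈ {μ : G.V | μ ∈ I ∧ G.lvl μ = N}, ENNReal.ofReal (G.dim lam μ) * φ μ)
      = SN G I φ N lam := by
  have hfin : {μ : G.V | μ ∈ I ∧ G.lvl μ = N}.Finite :=
    (G.levelFinite N).subset fun μ hμ => hμ.2
  rw [finsum_mem_eq_finite_toFinset_sum _ hfin]
  apply Finset.sum_congr _ fun _ _ => rfl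
  ext μ
  simp [mem_lvlF, Set.Finite.mem_toFinset, and_comm]

lemma SN_eq_zero {I : Set G.V} {φ : G.V → ℝ≥0∞} {N : ℕ} {lam : G.V}
    (h : N < G.lvl lam) : SN G I φ N lam = 0 := by
  apply Finset.sum_eq_zero
  intro μ hμ
  have hμl : G.lvl μ = N := mem_lvlF.mp (Finset.mem_filter.mp hμ).1
  have hd : G.dim lam μ = 0 := by
    rw [GradedGraph.dim, show G.lvl μ - G.lvl lam = 0 by omega]
    apply dimAux_zero_ne
    intro he
    rw [he] at h
    omega
  rw [hd, ENNReal.ofReal_zero, zero_mul]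

lemma SN_le {I : Set G.V} {φ : G.V → ℝ≥0∞} (hφ : G.Harmonic φ) (N : ℕ) (lam : G.V) :
    SN G I φ N lam ≤ φ lam := by
  rcases lt_or_ge N (G.lvl lam) with h | h
  · rw [SN_eq_zero h]; exact zero_le
  · obtain ⟨m, rfl⟩ : ∃ m, N = G.lvl lam + m := ⟨N - G.lvl lam, by omega⟩
    calc SN G I φ (G.lvl lam + m) lam
        ≤ ∑ μ ∈ G.lvlF (G.lvl lam + m), ENNReal.ofReal (G.dim lam μ) * φ μ :=
          Finset.sum_le_sum_of_subset (Finset.filter_subset _ _)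
      _ = φ lam := tfull φ hφ lam m

lemma harmonic_sum_ideal {I : Set G.V} {φ : G.V → ℝ≥0∞} (hφ : G.Harmonic φ)
    (hI : G.IsIdeal I) {c : G.V} (hc : c ∈ I) {N : ℕ} (hN : G.lvl c + 1 = N) :
    ∑ μ ∈ (G.lvlF N).filter (· ∈ I), ENNReal.ofReal (G.k c μ) * φ μ = φ c := by
  subst hN
  rw [harmonic_sum φ hφ c]
  apply Finset.sum_subset (Finset.filter_subset _ _)
  intro b hb hnb
  have hbI : b ∉ I := by
    intro hbI
    exact hnb (Finset.mem_filter.mpr ⟨hb, hbI⟩)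
  have hk : G.k c b = 0 := by
    by_contra hk
    exact hbI (hI c hc b (Relation.ReflTransGen.single (adj_of_ne hk)))
  rw [hk, ENNReal.ofReal_zero, zero_mul]

lemma SN_succ_le {I : Set G.V} {φ : G.V → ℝ≥0∞} (hφ : G.Harmonic φ)
    (hI : G.IsIdeal I) (N : ℕ) (lam : G.V) : SN G I φ N lam ≤ SN G I φ (N + 1) lam := by
  rcases lt_or_ge N (G.lvl lam) with h | h
  · rw [SN_eq_zero h]; exact zero_le
  set m := N - G.lvl lam with hm
  have hNm : N = G.lvl lam + m := by omega
  simp only [SN]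
  have key : ∀ μ ∈ (G.lvlF (N + 1)).filter (· ∈ I),
      ENNReal.ofReal (G.dim lam μ) * φ μ
        = ∑ c ∈ G.lvlF N, ENNReal.ofReal (G.dimAux m lam c) * (ENNReal.ofReal (G.k c μ) * φ μ) := by
    intro μ hμ
    have hμl : G.lvl μ = N + 1 := mem_lvlF.mp (Finset.mem_filter.mp hμ).1
    rw [dim_eq_dimAux (by omega : G.lvl μ = G.lvl lam + (m + 1)), dimAux_succ_sum,
      show G.lvl lam + m = N from hNm.symm,
      ENNReal.ofReal_sum_of_nonneg fun c _ => mul_nonneg (dimAux_nonneg m lam c) (G.k_nonneg c μ),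
      Finset.sum_mul]
    apply Finset.sum_congr rfl
    intro c _
    rw [ENNReal.ofReal_mul (dimAux_nonneg m lam c), mul_assoc]
  rw [Finset.sum_congr rfl key, Finset.sum_comm]
  have hrestrict : ∀ c ∈ G.lvlF N, c ∉ (G.lvlF N).filter (· ∈ I) →
      True := fun _ _ _ => trivial
  -- bound the inner double sum from below by restricting c to the ideal
  have hge :
      (∑ c ∈ (G.lvlF N).filter (· ∈ I), ∑ μ ∈ (G.lvlF (N + 1)).filter (· ∈ I),
          ENNReal.ofReal (G.dimAux m lam c) * (ENNReal.ofReal (G.k c μ) * φ μ))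
        ≤ ∑ c ∈ G.lvlF N, ∑ μ ∈ (G.lvlF (N + 1)).filter (· ∈ I),
            ENNReal.ofReal (G.dimAux m lam c) * (ENNReal.ofReal (G.k c μ) * φ μ) :=
    Finset.sum_le_sum_of_subset (Finset.filter_subset _ _)
  refine le_trans ?_ hge
  apply le_of_eq
  symm
  apply Finset.sum_congr rfl
  intro c hc
  have hcmem := Finset.mem_filter.mp hc
  have hclvl : G.lvl c = N := mem_lvlF.mp hcmem.1
  rw [← Finset.mul_sum, harmonic_sum_ideal hφ hI hcmem.2 (by omega),
    dim_eq_dimAux (by omega : G.lvl c = G.lvl lam + m)]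

lemma SN_monotone {I : Set G.V} {φ : G.V → ℝ≥0∞} (hφ : G.Harmonic φ)
    (hI : G.IsIdeal I) (lam : G.V) : Monotone fun N => SN G I φ N lam :=
  monotone_nat_of_le_succ fun N => SN_succ_le hφ hI N lam

lemma SN_rec {I : Set G.V} {φ : G.V → ℝ≥0∞} {N : ℕ} {lam : G.V}
    (hN : G.lvl lam + 1 ≤ N) :
    SN G I φ N lam = ∑ b ∈ G.lvlF (G.lvl lam + 1), ENNReal.ofReal (G.k lam b) * SN G I φ N b := by
  obtain ⟨m, hm⟩ : ∃ m, N = G.lvl lam + (m + 1) := ⟨N - G.lvl lam - 1, by omega⟩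
  simp only [SN]
  have key : ∀ μ ∈ (G.lvlF N).filter (· ∈ I),
      ENNReal.ofReal (G.dim lam μ) * φ μ
        = ∑ b ∈ G.lvlF (G.lvl lam + 1),
            ENNReal.ofReal (G.k lam b) * (ENNReal.ofReal (G.dimAux m b μ) * φ μ) := by
    intro μ hμ
    have hμl : G.lvl μ = N := mem_lvlF.mp (Finset.mem_filter.mp hμ).1
    rw [dim_eq_dimAux (by omega : G.lvl μ = G.lvl lam + (m + 1)), dimAux_succ_left,
      ENNReal.ofReal_sum_of_nonneg fun b _ => mul_nonneg (G.k_nonneg lam b) (dimAux_nonneg m b μ),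
      Finset.sum_mul]
    apply Finset.sum_congr rfl
    intro b _
    rw [ENNReal.ofReal_mul (G.k_nonneg lam b), mul_assoc]
  rw [Finset.sum_congr rfl key, Finset.sum_comm]
  apply Finset.sum_congr rfl
  intro b hb
  have hblvl : G.lvl b = G.lvl lam + 1 := mem_lvlF.mp hb
  rw [← Finset.mul_sum]
  congr 1
  apply Finset.sum_congr rfl
  intro μ hμ
  have hμl : G.lvl μ = N := mem_lvlF.mp (Finset.mem_filter.mp hμ).1
  rw [dim_eq_dimAux (by omega : G.lvl μ = G.lvl b + m)]

/-- The candidate limit function. -/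
def psi (G : GradedGraph) (I : Set G.V) (φ : G.V → ℝ≥0∞) (a : G.V) : ℝ≥0∞ :=
  ⨆ N, SN G I φ N a

lemma psi_le {I : Set G.V} {φ : G.V → ℝ≥0∞} (hφ : G.Harmonic φ) (a : G.V) :
    psi G I φ a ≤ φ a :=
  iSup_le fun N => SN_le hφ N a

lemma psi_eq_on_I {I : Set G.V} {φ : G.V → ℝ≥0∞} (hφ : G.Harmonic φ)
    {μ : G.V} (hμ : μ ∈ I) : psi G I φ μ = φ μ := by
  apply le_antisymm (psi_le hφ μ)
  have : SN G I φ (G.lvl μ) μ = φ μ := by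
    rw [SN]
    rw [Finset.sum_eq_single_of_mem μ
      (Finset.mem_filter.mpr ⟨mem_lvlF.mpr rfl, hμ⟩)]
    · rw [dim_eq_dimAux (m := 0) (by simp), dimAux_zero_self, ENNReal.ofReal_one, one_mul]
    · intro ν hν hne
      have : G.lvl ν = G.lvl μ := mem_lvlF.mp (Finset.mem_filter.mp hν).1
      rw [dim_eq_dimAux (by omega : G.lvl ν = G.lvl μ + 0), dimAux_zero_ne (Ne.symm hne),
        ENNReal.ofReal_zero, zero_mul]
  rw [← this]
  exact le_iSup (fun N => SN G I φ N μ) (G.lvl μ)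

lemma psi_shift {I : Set G.V} {φ : G.V → ℝ≥0∞} (hφ : G.Harmonic φ)
    (hI : G.IsIdeal I) (K : ℕ) (a : G.V) :
    (⨆ N, SN G I φ (N + K) a) = psi G I φ a := by
  apply le_antisymm
  · exact iSup_le fun N => le_iSup (fun N => SN G I φ N a) (N + K)
  · exact iSup_le fun N => le_trans (SN_monotone hφ hI a (Nat.le_add_right N K))
      (le_iSup (fun N => SN G I φ (N + K) a) N)

lemma psi_harmonic {I : Set G.V} {φ : G.V → ℝ≥0∞} (hφ : G.Harmonic φ)
    (hI : G.IsIdeal I) : G.Harmonic (psi G I φ) := by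
  intro lam
  have hsupp : Function.support (fun b => ENNReal.ofReal (G.k lam b) * psi G I φ b)
      ⊆ ↑(G.lvlF (G.lvl lam + 1)) := by
    intro b hb
    apply Finset.mem_coe.mpr
    apply mem_lvlF.mpr
    apply G.k_grade lam b
    intro h0
    apply hb
    simp [h0]
  rw [finsum_eq_finset_sum_of_support_subset _ hsupp]
  set K := G.lvl lam + 1 with hK
  have step : ∀ b ∈ G.lvlF K, ENNReal.ofReal (G.k lam b) * psi G I φ b
      = ⨆ N, ENNReal.ofReal (G.k lam b) * SN G I φ (N + K) b := by
    intro b _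
    rw [← psi_shift hφ hI K b, ENNReal.mul_iSup]
  rw [Finset.sum_congr rfl step,
    ENNReal.finsetSum_iSup_of_monotone (fun b {i j} hij => by
      exact mul_le_mul_right (SN_monotone hφ hI b (by omega)) _)]
  have : ∀ N, (∑ b ∈ G.lvlF K, ENNReal.ofReal (G.k lam b) * SN G I φ (N + K) b)
      = SN G I φ (N + K) lam := fun N => (SN_rec (by omega)).symm
  rw [iSup_congr this, psi_shift hφ hI K lam]

end GradedGraph

end AuxProof2

noncomputable section AuxProof3

namespace GradedGraph

variable {G : GradedGraph}

lemma evalC_eq_sum (θ : G.V → ℝ≥0∞) (c : G.V →₀ ℝ) {s : Finset G.V}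
    (hs : c.support ⊆ s) : G.evalC θ c = ∑ a ∈ s, ENNReal.ofReal (c a) * θ a := by
  apply Finset.sum_subset hs
  intro a _ ha
  rw [Finsupp.notMem_support_iff.mp ha, ENNReal.ofReal_zero, zero_mul]

lemma evalC_zero (θ : G.V → ℝ≥0∞) : G.evalC θ 0 = 0 := by
  simp [GradedGraph.evalC]

lemma evalC_add (θ : G.V → ℝ≥0∞) {c d : G.V →₀ ℝ} (hc : ∀ a, 0 ≤ c a) (hd : ∀ a, 0 ≤ d a) :
    G.evalC θ (c + d) = G.evalC θ c + G.evalC θ d := by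
  rw [evalC_eq_sum θ (c + d) (Finsupp.support_add),
    evalC_eq_sum θ c (Finset.subset_union_left : c.support ⊆ c.support ∪ d.support),
    evalC_eq_sum θ d (Finset.subset_union_right : d.support ⊆ c.support ∪ d.support),
    ← Finset.sum_add_distrib]
  apply Finset.sum_congr rfl
  intro a _
  rw [Finsupp.add_apply, ENNReal.ofReal_add (hc a) (hd a), add_mul]

lemma evalC_smul (θ : G.V → ℝ≥0∞) {t : ℝ} (ht : 0 ≤ t) (c : G.V →₀ ℝ) :
    G.evalC θ (t • c) = ENNReal.ofReal t * G.evalC θ c := by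
  rw [evalC_eq_sum θ (t • c) (Finsupp.support_smul), GradedGraph.evalC, Finset.mul_sum]
  apply Finset.sum_congr rfl
  intro a _
  rw [Finsupp.smul_apply, smul_eq_mul, ENNReal.ofReal_mul ht, mul_assoc]

lemma evalC_single (θ : G.V → ℝ≥0∞) (b : G.V) (t : ℝ) :
    G.evalC θ (Finsupp.single b t) = ENNReal.ofReal t * θ b := by
  rw [evalC_eq_sum θ _ (Finsupp.support_single_subset),
    Finset.sum_singleton, Finsupp.single_eq_same]

lemma evalC_finset_sum (θ : G.V → ℝ≥0∞) {ι : Type*} (s : Finset ι) (f : ι → G.V →₀ ℝ)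
    (hf : ∀ i ∈ s, ∀ a, 0 ≤ f i a) :
    G.evalC θ (∑ i ∈ s, f i) = ∑ i ∈ s, G.evalC θ (f i) := by
  classical
  induction s using Finset.induction_on with
  | empty => simp [evalC_zero]
  | @insert i s hi ih =>
    rw [Finset.sum_insert hi, Finset.sum_insert hi,
      evalC_add θ (fun a => hf i (Finset.mem_insert_self i s) a)
        (fun a => by
          rw [Finsupp.finset_sum_apply]
          exact Finset.sum_nonneg fun j hj => hf j (Finset.mem_insert_of_mem hj) a),
      ih fun j hj a => hf j (Finset.mem_insert_of_mem hj) a]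

lemma evalC_mono_pointwise (θ : G.V → ℝ≥0∞) {c d : G.V →₀ ℝ} (h : ∀ v, c v ≤ d v) :
    G.evalC θ c ≤ G.evalC θ d := by
  rw [evalC_eq_sum θ c (Finset.subset_union_left : c.support ⊆ c.support ∪ d.support),
    evalC_eq_sum θ d (Finset.subset_union_right : d.support ⊆ c.support ∪ d.support)]
  apply Finset.sum_le_sum
  intro a _
  exact mul_le_mul_left (ENNReal.ofReal_le_ofReal (h a)) _

lemma evalC_congr {θ₁ θ₂ : G.V → ℝ≥0∞} {c : G.V →₀ ℝ}
    (h : ∀ v, c v ≠ 0 → θ₁ v = θ₂ v) : G.evalC θ₁ c = G.evalC θ₂ c := by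
  apply Finset.sum_congr rfl
  intro a ha
  rw [h a (Finsupp.mem_support_iff.mp ha)]

lemma evalC_ne_top {θ : G.V → ℝ≥0∞} {c : G.V →₀ ℝ}
    (h : ∀ v, c v ≠ 0 → θ v ≠ ⊤) : G.evalC θ c ≠ ⊤ := by
  apply ENNReal.sum_ne_top.mpr
  intro a ha
  exact ENNReal.mul_ne_top ENNReal.ofReal_ne_top (h a (Finsupp.mem_support_iff.mp ha))

lemma evalC_eq_top_elim {θ : G.V → ℝ≥0∞} {c : G.V →₀ ℝ}
    (h : G.evalC θ c = ⊤) : ∃ v, c v ≠ 0 ∧ θ v = ⊤ := by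
  obtain ⟨a, ha, hat⟩ := ENNReal.sum_eq_top.mp h
  refine ⟨a, Finsupp.mem_support_iff.mp ha, ?_⟩
  rcases ENNReal.mul_eq_top.mp hat with ⟨-, h2⟩ | ⟨h1, -⟩
  · exact h2
  · exact absurd h1 ENNReal.ofReal_ne_top

/-- Pushing a vertex up `m` levels in the free module. -/
def pushN (G : GradedGraph) : ℕ → G.V → (G.V →₀ ℝ)
  | 0, a => Finsupp.single a 1
  | m + 1, a => ∑ b ∈ G.lvlF (G.lvl a + 1), G.k a b • pushN G m b

lemma pushN_apply : ∀ (m : ℕ) (a v : G.V), pushN G m a v = G.dimAux m a v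
  | 0, a, v => by
      rw [pushN, Finsupp.single_apply, dimAux_zero_apply]
  | m + 1, a, v => by
      rw [pushN, Finsupp.finset_sum_apply, dimAux_succ_left]
      apply Finset.sum_congr rfl
      intro b _
      rw [Finsupp.smul_apply, smul_eq_mul, pushN_apply m b v]

lemma pushN_nonneg (m : ℕ) (a v : G.V) : 0 ≤ pushN G m a v := by
  rw [pushN_apply]; exact dimAux_nonneg m a v

lemma pushN_Le {m : ℕ} {a v : G.V} (h : pushN G m a v ≠ 0) : G.Le a v := by
  rw [pushN_apply] at h
  exact dimAux_Le m h

lemma evalC_pushN (θ : G.V → ℝ≥0∞) (hθ : G.Harmonic θ) :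
    ∀ (m : ℕ) (a : G.V), G.evalC θ (pushN G m a) = θ a
  | 0, a => by
      rw [pushN, evalC_single, ENNReal.ofReal_one, one_mul]
  | m + 1, a => by
      rw [pushN, evalC_finset_sum θ _ _
          (fun b _ v => smul_nonneg (G.k_nonneg a b) (pushN_nonneg m b v))]
      have : ∀ b ∈ G.lvlF (G.lvl a + 1), G.evalC θ (G.k a b • pushN G m b)
          = ENNReal.ofReal (G.k a b) * θ b := by
        intro b _
        rw [evalC_smul θ (G.k_nonneg a b), evalC_pushN θ hθ m b]
      rw [Finset.sum_congr rfl this, ← harmonic_sum θ hθ a]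

lemma toK0_eq_iff {x y : G.V →₀ ℝ} : G.toK0 x = G.toK0 y ↔ x - y ∈ G.relSub := by
  rw [GradedGraph.toK0, Submodule.mkQ_apply, Submodule.mkQ_apply]
  exact Submodule.Quotient.eq _

lemma finsum_rel (a : G.V) :
    (∑ᶠ b, G.k a b • Finsupp.single b (1 : ℝ)) =
      ∑ b ∈ G.lvlF (G.lvl a + 1), G.k a b • Finsupp.single b (1 : ℝ) := by
  apply finsum_eq_finset_sum_of_support_subset
  intro b hb
  apply Finset.mem_coe.mpr
  apply mem_lvlF.mpr
  apply G.k_grade a b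
  intro h0
  apply hb
  simp [h0]

lemma rel_mem (a : G.V) :
    (Finsupp.single a 1 - ∑ b ∈ G.lvlF (G.lvl a + 1), G.k a b • Finsupp.single b (1 : ℝ))
      ∈ G.relSub := by
  rw [← finsum_rel]
  exact Submodule.subset_span ⟨a, rfl⟩

lemma toK0_push1 (a : G.V) :
    G.toK0 (∑ b ∈ G.lvlF (G.lvl a + 1), G.k a b • Finsupp.single b (1 : ℝ)) = G.vtx a := by
  symm
  exact toK0_eq_iff.mpr (rel_mem a)

lemma toK0_pushN : ∀ (m : ℕ) (a : G.V), G.toK0 (pushN G m a) = G.vtx a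
  | 0, a => rfl
  | m + 1, a => by
      rw [pushN, map_sum]
      have : ∀ b ∈ G.lvlF (G.lvl a + 1), G.toK0 (G.k a b • pushN G m b)
          = G.k a b • G.toK0 (Finsupp.single b (1 : ℝ)) := by
        intro b _
        rw [map_smul, toK0_pushN m b]
        rfl
      rw [Finset.sum_congr rfl this]
      have : (∑ b ∈ G.lvlF (G.lvl a + 1), G.k a b • G.toK0 (Finsupp.single b (1 : ℝ)))
          = G.toK0 (∑ b ∈ G.lvlF (G.lvl a + 1), G.k a b • Finsupp.single b (1 : ℝ)) := by
        rw [map_sum]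
        apply Finset.sum_congr rfl
        intro b _
        rw [map_smul]
      rw [this, toK0_push1]

/-- The level-`M` straightening operator. -/
def TM (G : GradedGraph) (M : ℕ) : (G.V →₀ ℝ) →ₗ[ℝ] (G.V →₀ ℝ) :=
  Finsupp.lsum ℝ fun a => LinearMap.toSpanSingleton ℝ _ (pushN G (M - G.lvl a) a)

lemma TM_single (M : ℕ) (a : G.V) (t : ℝ) :
    TM G M (Finsupp.single a t) = t • pushN G (M - G.lvl a) a := by
  rw [TM, Finsupp.lsum_single, LinearMap.toSpanSingleton_apply]

lemma TM_eq_sum (M : ℕ) (c : G.V →₀ ℝ) :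
    TM G M c = ∑ a ∈ c.support, c a • pushN G (M - G.lvl a) a := rfl

lemma TM_nonneg (M : ℕ) {c : G.V →₀ ℝ} (hc : ∀ a, 0 ≤ c a) (v : G.V) :
    0 ≤ TM G M c v := by
  rw [TM_eq_sum, Finsupp.finset_sum_apply]
  apply Finset.sum_nonneg
  intro a _
  rw [Finsupp.smul_apply, smul_eq_mul]
  exact mul_nonneg (hc a) (pushN_nonneg _ a v)

lemma evalC_TM (θ : G.V → ℝ≥0∞) (hθ : G.Harmonic θ) (M : ℕ) {c : G.V →₀ ℝ}
    (hc : ∀ a, 0 ≤ c a) : G.evalC θ (TM G M c) = G.evalC θ c := by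
  rw [TM_eq_sum, evalC_finset_sum θ _ _
    (fun a _ v => smul_nonneg (hc a) (pushN_nonneg _ a v))]
  apply Finset.sum_congr rfl
  intro a _
  rw [evalC_smul θ (hc a), evalC_pushN θ hθ]

lemma toK0_TM (M : ℕ) (c : G.V →₀ ℝ) : G.toK0 (TM G M c) = G.toK0 c := by
  induction c using Finsupp.induction with
  | zero => simp
  | single_add a b f haf hb ih =>
    have hs : G.toK0 (Finsupp.single a b) = b • G.vtx a := by
      rw [GradedGraph.vtx, ← map_smul, Finsupp.smul_single, smul_eq_mul, mul_one]
    rw [map_add, map_add, TM_single, map_smul, toK0_pushN, ih, map_add, hs]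

lemma TM_rel (M : ℕ) (a : G.V) (hM : G.lvl a + 1 ≤ M) :
    TM G M (Finsupp.single a 1 - ∑ᶠ b, G.k a b • Finsupp.single b (1 : ℝ)) = 0 := by
  set m := M - G.lvl a - 1 with hm
  rw [finsum_rel, map_sub, map_sum, TM_single, one_smul]
  have h1 : ∀ b ∈ G.lvlF (G.lvl a + 1), TM G M (G.k a b • Finsupp.single b (1 : ℝ))
      = G.k a b • pushN G m b := by
    intro b hb
    rw [map_smul, TM_single, one_smul]
    congr 2
    have := mem_lvlF.mp hb
    omega
  rw [Finset.sum_congr rfl h1]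
  have h2 : M - G.lvl a = m + 1 := by omega
  rw [h2, pushN, sub_self]

lemma TM_relSub {r : G.V →₀ ℝ} (hr : r ∈ G.relSub) :
    ∃ M0 : ℕ, ∀ M ≥ M0, TM G M r = 0 := by
  refine Submodule.span_induction ?_ ?_ ?_ ?_ hr
  · rintro x ⟨a, rfl⟩
    exact ⟨G.lvl a + 1, fun M hM => TM_rel M a hM⟩
  · exact ⟨0, fun M _ => map_zero _⟩
  · rintro x y _ _ ⟨Mx, hx⟩ ⟨My, hy⟩
    exact ⟨max Mx My, fun M hM => by
      rw [map_add, hx M (le_trans (le_max_left _ _) hM),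
        hy M (le_trans (le_max_right _ _) hM), add_zero]⟩
  · rintro t x _ ⟨Mx, hx⟩
    exact ⟨Mx, fun M hM => by rw [map_smul, hx M hM, smul_zero]⟩

/- cone and leK lemmas -/

lemma cone_toK0 {c : G.V →₀ ℝ} (hc : ∀ a, 0 ≤ c a) : G.toK0 c ∈ G.cone :=
  ⟨c, hc, rfl⟩

lemma leK_refl (x : G.K0) : G.leK x x := by
  rw [GradedGraph.leK, sub_self]
  exact ⟨0, fun a => le_refl 0, by rw [map_zero]⟩

lemma leK_trans {x y z : G.K0} (h1 : G.leK x y) (h2 : G.leK y z) : G.leK x z := by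
  obtain ⟨c, hc, hceq⟩ := h1
  obtain ⟨d, hd, hdeq⟩ := h2
  exact ⟨d + c, fun a => add_nonneg (hd a) (hc a), by
    rw [map_add, ← hceq, ← hdeq, sub_add_sub_cancel]⟩

lemma leK_of_pointwise {c d : G.V →₀ ℝ} (h : ∀ v, c v ≤ d v) :
    G.leK (G.toK0 c) (G.toK0 d) :=
  ⟨d - c, fun a => by
      rw [Finsupp.sub_apply]; exact sub_nonneg.mpr (h a),
    by rw [map_sub]⟩

lemma leK_smul {t : ℝ} (ht : 0 ≤ t) {x y : G.K0} (h : G.leK x y) :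
    G.leK (t • x) (t • y) := by
  obtain ⟨c, hc, hceq⟩ := h
  exact ⟨t • c, fun a => by
      rw [Finsupp.smul_apply, smul_eq_mul]; exact mul_nonneg ht (hc a),
    by rw [map_smul, ← hceq, smul_sub]⟩

/-- Key monotonicity: evaluation of a harmonic function is monotone along `leK`. -/
lemma eval_mono (θ : G.V → ℝ≥0∞) (hθ : G.Harmonic θ) {c d : G.V →₀ ℝ}
    (hc : ∀ a, 0 ≤ c a) (hd : ∀ a, 0 ≤ d a)
    (h : G.leK (G.toK0 d) (G.toK0 c)) : G.evalC θ d ≤ G.evalC θ c := by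
  obtain ⟨e, he, heq⟩ := h
  have hr : c - d - e ∈ G.relSub := by
    rw [← Submodule.ker_mkQ (p := G.relSub), LinearMap.mem_ker]
    show G.toK0 _ = 0
    rw [map_sub, map_sub, ← heq]
    abel
  obtain ⟨M0, hM0⟩ := TM_relSub hr
  have hsplit : TM G M0 c = TM G M0 d + TM G M0 e := by
    have : c = d + e + (c - d - e) := by abel
    rw [this, map_add, map_add, hM0 M0 le_rfl, add_zero]
  have hpt : ∀ v, TM G M0 d v ≤ TM G M0 c v := by
    intro v
    rw [hsplit, Finsupp.add_apply]
    exact le_add_of_nonneg_right (TM_nonneg M0 he v)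
  calc G.evalC θ d = G.evalC θ (TM G M0 d) := (evalC_TM θ hθ M0 hd).symm
    _ ≤ G.evalC θ (TM G M0 c) := evalC_mono_pointwise θ hpt
    _ = G.evalC θ c := evalC_TM θ hθ M0 hc

end GradedGraph

end AuxProof3

noncomputable section AuxProof4

namespace GradedGraph

variable {G : GradedGraph}

lemma C_eq_one {C x : ℝ≥0∞} (h0 : x ≠ 0) (hT : x ≠ ⊤) (h : x = C * x) : C = 1 := by
  calc C = C * (x * x⁻¹) := by rw [ENNReal.mul_inv_cancel h0 hT, mul_one]
    _ = (C * x) * x⁻¹ := (mul_assoc _ _ _).symm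
    _ = x * x⁻¹ := by rw [← h]
    _ = 1 := ENNReal.mul_inv_cancel h0 hT

lemma single_one_nonneg {b : G.V} : ∀ v, (0:ℝ) ≤ (Finsupp.single b (1:ℝ)) v := by
  intro v
  rw [Finsupp.single_apply]
  split <;> norm_num

lemma smul_nonneg' {t : ℝ} (ht : 0 ≤ t) {c : G.V →₀ ℝ} (hc : ∀ v, 0 ≤ c v) :
    ∀ v, 0 ≤ (t • c) v := fun v => by
  rw [Finsupp.smul_apply, smul_eq_mul]
  exact mul_nonneg ht (hc v)

lemma single_smul_le {c : G.V →₀ ℝ} (hc : ∀ v, 0 ≤ c v) (a : G.V) :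
    ∀ v, (c a • Finsupp.single a (1:ℝ)) v ≤ c v := by
  intro v
  rw [Finsupp.smul_apply, Finsupp.single_apply, smul_eq_mul]
  by_cases h : a = v
  · subst h; rw [if_pos rfl, mul_one]
  · rw [if_neg h, mul_zero]; exact hc v

lemma leK_single_self {c : G.V →₀ ℝ} (hc : ∀ v, 0 ≤ c v) (a : G.V) :
    G.leK (G.toK0 (c a • Finsupp.single a (1:ℝ))) (G.toK0 c) :=
  leK_of_pointwise (single_smul_le hc a)

lemma dim_nonneg (a b : G.V) : 0 ≤ G.dim a b := dimAux_nonneg _ a b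

/-- The element of the free module supported on level `N` of the ideal, with
dim-coefficients. -/
def dI (G : GradedGraph) (I : Set G.V) (N : ℕ) (a : G.V) : G.V →₀ ℝ :=
  ∑ μ ∈ (G.lvlF N).filter (· ∈ I), G.dim a μ • Finsupp.single μ 1

lemma dI_apply (I : Set G.V) (N : ℕ) (a v : G.V) :
    dI G I N a v = if v ∈ (G.lvlF N).filter (· ∈ I) then G.dim a v else 0 := by
  rw [dI, Finsupp.finset_sum_apply]
  rw [Finset.sum_congr rfl (fun μ _ => by
    rw [Finsupp.smul_apply, Finsupp.single_apply, smul_eq_mul, mul_ite, mul_one, mul_zero])]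
  exact Finset.sum_ite_eq' ((G.lvlF N).filter (· ∈ I)) v fun μ => G.dim a μ

lemma dI_nonneg (I : Set G.V) (N : ℕ) (a : G.V) : ∀ v, 0 ≤ dI G I N a v := by
  intro v
  rw [dI_apply]
  split
  · exact dim_nonneg a v
  · exact le_refl 0

lemma dI_supp (I : Set G.V) (N : ℕ) (a : G.V) {v : G.V} (h : dI G I N a v ≠ 0) :
    v ∈ I := by
  rw [dI_apply] at h
  by_cases hv : v ∈ (G.lvlF N).filter (· ∈ I)
  · exact (Finset.mem_filter.mp hv).2
  · rw [if_neg hv] at h; exact absurd rfl h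

lemma evalC_dI (θ : G.V → ℝ≥0∞) (I : Set G.V) (N : ℕ) (a : G.V) :
    G.evalC θ (dI G I N a)
      = ∑ μ ∈ (G.lvlF N).filter (· ∈ I), ENNReal.ofReal (G.dim a μ) * θ μ := by
  rw [dI, evalC_finset_sum θ _ _ (fun μ _ v => by
    rw [Finsupp.smul_apply, smul_eq_mul]
    exact mul_nonneg (dim_nonneg a μ)
      (by rw [Finsupp.single_apply]; split <;> norm_num))]
  apply Finset.sum_congr rfl
  intro μ _
  rw [Finsupp.smul_single, smul_eq_mul, mul_one, evalC_single]

lemma evalC_dI_phi (I : Set G.V) (φ : G.V → ℝ≥0∞) (N : ℕ) (a : G.V) :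
    G.evalC φ (dI G I N a) = SN G I φ N a := evalC_dI φ I N a

lemma evalC_dI_psi {I : Set G.V} {φ : G.V → ℝ≥0∞} (hφh : G.Harmonic φ) (N : ℕ) (a : G.V) :
    G.evalC (psi G I φ) (dI G I N a) = SN G I φ N a := by
  rw [evalC_dI]
  apply Finset.sum_congr rfl
  intro μ hμ
  rw [psi_eq_on_I hφh (Finset.mem_filter.mp hμ).2]

lemma dI_le_pushN {I : Set G.V} {N : ℕ} {a : G.V} (hN : G.lvl a ≤ N) :
    ∀ v, dI G I N a v ≤ pushN G (N - G.lvl a) a v := by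
  intro v
  rw [dI_apply, pushN_apply]
  split
  case isTrue h =>
    have hvl : G.lvl v = N := mem_lvlF.mp (Finset.mem_filter.mp h).1
    rw [dim_eq_dimAux (by omega : G.lvl v = G.lvl a + (N - G.lvl a))]
  case isFalse h => exact dimAux_nonneg _ a v

lemma leK_dI {I : Set G.V} {N : ℕ} {a : G.V} (hN : G.lvl a ≤ N) :
    G.leK (G.toK0 (dI G I N a)) (G.vtx a) := by
  have := leK_of_pointwise (G := G) (dI_le_pushN (I := I) hN)
  rwa [toK0_pushN] at this

lemma leK_dim_single {a μ1 : G.V} {m : ℕ} (_hlvl : G.lvl μ1 = G.lvl a + m) :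
    G.leK (G.toK0 (G.dimAux m a μ1 • Finsupp.single μ1 (1:ℝ))) (G.vtx a) := by
  have hpt : ∀ v, (G.dimAux m a μ1 • Finsupp.single μ1 (1:ℝ)) v ≤ pushN G m a v := by
    intro v
    rw [Finsupp.smul_apply, Finsupp.single_apply, smul_eq_mul, pushN_apply]
    by_cases h : μ1 = v
    · subst h; rw [if_pos rfl, mul_one]
    · rw [if_neg h, mul_zero]; exact dimAux_nonneg m a v
  have := leK_of_pointwise (G := G) hpt
  rwa [toK0_pushN] at this

/-- Approximation of the value at an infinite vertex of the ideal by finite pieces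
supported inside the ideal. -/
lemma approx {I : Set G.V} {φ : G.V → ℝ≥0∞} (hφh : G.Harmonic φ) (hI : G.IsIdeal I)
    (hsup : ∀ c : G.V →₀ ℝ, (∀ a, 0 ≤ c a) →
      G.evalC φ c = ⨆ d : {d : G.V →₀ ℝ //
        (∀ a, 0 ≤ d a) ∧ G.leK (G.toK0 d) (G.toK0 c) ∧ G.evalC φ d ≠ ⊤},
          G.evalC φ d.1)
    {μ1 : G.V} (hμI : μ1 ∈ I) (hμtop : φ μ1 = ⊤) {L : ℝ≥0∞} (hL : L ≠ ⊤) :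
    ∃ d : G.V →₀ ℝ, (∀ a, 0 ≤ d a) ∧ (∀ v, d v ≠ 0 → v ∈ I ∧ φ v ≠ ⊤) ∧
      G.leK (G.toK0 d) (G.vtx μ1) ∧ L < G.evalC φ d ∧ G.evalC φ d ≠ ⊤ := by
  have htop : G.evalC φ (Finsupp.single μ1 1) = ⊤ := by
    rw [evalC_single, hμtop, ENNReal.ofReal_one, one_mul]
  have hsup1 := hsup _ (single_one_nonneg (b := μ1))
  rw [htop] at hsup1
  obtain ⟨⟨d0, hd0nn, hd0le, hd0fin⟩, hd0⟩ :=
    iSup_eq_top.mp hsup1.symm L (lt_top_iff_ne_top.mpr hL)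
  obtain ⟨e, henn, heeq⟩ := hd0le
  have hr : Finsupp.single μ1 1 - d0 - e ∈ G.relSub := by
    have hx : G.toK0 (Finsupp.single μ1 1 - d0 - e) = G.toK0 0 := by
      rw [map_zero, map_sub, map_sub,
        show G.toK0 (Finsupp.single μ1 1) - G.toK0 d0 = G.toK0 e from heeq]
      exact sub_self _
    have := toK0_eq_iff.mp hx
    rwa [sub_zero] at this
  obtain ⟨M0, hM0⟩ := TM_relSub hr
  set M := max M0 (G.lvl μ1) with hMdef
  have hsplit : TM G M (Finsupp.single μ1 1) = TM G M d0 + TM G M e := by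
    have h1 : TM G M (Finsupp.single μ1 1) - TM G M d0 - TM G M e = 0 := by
      rw [← map_sub, ← map_sub]
      exact hM0 M (le_max_left _ _)
    rw [sub_sub, sub_eq_zero] at h1
    exact h1
  have hknn := TM_nonneg (G := G) M hd0nn
  have heval : G.evalC φ (TM G M d0) = G.evalC φ d0 := evalC_TM φ hφh M hd0nn
  refine ⟨TM G M d0, hknn, ?_, ?_, ?_, ?_⟩
  · intro v hv
    constructor
    · have hpos : 0 < TM G M d0 v := (hknn v).lt_of_ne (Ne.symm hv)
      have hpush : pushN G (M - G.lvl μ1) μ1 v ≠ 0 := by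
        have h1 : TM G M (Finsupp.single μ1 1) v
            = TM G M d0 v + TM G M e v := by rw [hsplit, Finsupp.add_apply]
        rw [TM_single, one_smul] at h1
        have h2 : 0 < pushN G (M - G.lvl μ1) μ1 v :=
          lt_of_lt_of_le hpos (by rw [h1]; exact le_add_of_nonneg_right (TM_nonneg M henn v))
        exact h2.ne'
      exact hI μ1 hμI v (pushN_Le hpush)
    · intro hvt
      apply hd0fin
      rw [← heval]
      apply ENNReal.sum_eq_top.mpr
      refine ⟨v, Finsupp.mem_support_iff.mpr hv, ?_⟩
      rw [hvt]
      exact ENNReal.mul_top (by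
        have hpos : 0 < TM G M d0 v := (hknn v).lt_of_ne (Ne.symm hv)
        exact (ENNReal.ofReal_pos.mpr hpos).ne')
  · have hveq : G.vtx μ1 = G.toK0 (TM G M d0) + G.toK0 (TM G M e) := by
      rw [← map_add, ← hsplit, toK0_TM]
      rfl
    exact ⟨TM G M e, TM_nonneg M henn, by rw [hveq, add_sub_cancel_left]⟩
  · rw [heval]; exact hd0
  · rw [heval]; exact hd0fin

lemma mustar {I : Set G.V} {φ : G.V → ℝ≥0∞} (hφh : G.Harmonic φ) (hI : G.IsIdeal I)
    (hsup : ∀ c : G.V →₀ ℝ, (∀ a, 0 ≤ c a) →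
      G.evalC φ c = ⨆ d : {d : G.V →₀ ℝ //
        (∀ a, 0 ≤ d a) ∧ G.leK (G.toK0 d) (G.toK0 c) ∧ G.evalC φ d ≠ ⊤},
          G.evalC φ d.1)
    (h0 : ∃ μ ∈ I, φ μ ≠ 0) : ∃ μ, μ ∈ I ∧ φ μ ≠ 0 ∧ φ μ ≠ ⊤ := by
  obtain ⟨μ0, hμ0I, hμ00⟩ := h0
  by_cases ht : φ μ0 = ⊤
  · obtain ⟨d, hdnn, hdsupp, -, hdgt, -⟩ :=
      approx hφh hI hsup hμ0I ht (L := 0) (by simp)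
    have hne : G.evalC φ d ≠ 0 := hdgt.ne'
    obtain ⟨v, hv, hterm⟩ : ∃ v ∈ d.support, ENNReal.ofReal (d v) * φ v ≠ 0 := by
      by_contra hall
      push_neg at hall
      exact hne (Finset.sum_eq_zero hall)
    have hv0 : d v ≠ 0 := Finsupp.mem_support_iff.mp hv
    refine ⟨v, (hdsupp v hv0).1, ?_, (hdsupp v hv0).2⟩
    intro h
    exact hterm (by rw [h, mul_zero])
  · exact ⟨μ0, hμ0I, hμ00, ht⟩

/-- If `psi` agrees with `φ` at all finite points, it is infinite at all infinite points. -/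
lemma psi_top {I : Set G.V} {φ : G.V → ℝ≥0∞} (hφh : G.Harmonic φ) (hI : G.IsIdeal I)
    (hsup : ∀ c : G.V →₀ ℝ, (∀ a, 0 ≤ c a) →
      G.evalC φ c = ⨆ d : {d : G.V →₀ ℝ //
        (∀ a, 0 ≤ d a) ∧ G.leK (G.toK0 d) (G.toK0 c) ∧ G.evalC φ d ≠ ⊤},
          G.evalC φ d.1)
    (heqJ : ∀ v, φ v ≠ ⊤ → psi G I φ v = φ v) {a : G.V} (ha : φ a = ⊤) :
    psi G I φ a = ⊤ := by
  by_contra hne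
  have hlt : psi G I φ a < ⊤ := lt_top_iff_ne_top.mpr hne
  have htop : G.evalC φ (Finsupp.single a 1) = ⊤ := by
    rw [evalC_single, ha, ENNReal.ofReal_one, one_mul]
  have hsup1 := hsup _ (single_one_nonneg (b := a))
  rw [htop] at hsup1
  obtain ⟨d0, hd0⟩ := iSup_eq_top.mp hsup1.symm (psi G I φ a) hlt
  obtain ⟨hnn, hle, hfin⟩ := d0.2
  have hJ : ∀ v, d0.1 v ≠ 0 → φ v ≠ ⊤ := by
    intro v hv hvt
    apply hfin
    apply ENNReal.sum_eq_top.mpr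
    refine ⟨v, Finsupp.mem_support_iff.mpr hv, ?_⟩
    rw [hvt]
    exact ENNReal.mul_top (ENNReal.ofReal_pos.mpr ((hnn v).lt_of_ne (Ne.symm hv))).ne'
  have heval : G.evalC (psi G I φ) d0.1 = G.evalC φ d0.1 :=
    evalC_congr fun v hv => heqJ v (hJ v hv)
  have hmono := eval_mono (psi G I φ) (psi_harmonic hφh hI) (single_one_nonneg (b := a)) hnn hle
  rw [heval, evalC_single, ENNReal.ofReal_one, one_mul] at hmono
  exact absurd (lt_of_lt_of_le hd0 hmono) (lt_irrefl _)

/-- The supremum property (normality) for `psi`. -/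
lemma psi_supcond {I : Set G.V} {φ : G.V → ℝ≥0∞} (hφh : G.Harmonic φ) (hI : G.IsIdeal I)
    (hsup : ∀ c : G.V →₀ ℝ, (∀ a, 0 ≤ c a) →
      G.evalC φ c = ⨆ d : {d : G.V →₀ ℝ //
        (∀ a, 0 ≤ d a) ∧ G.leK (G.toK0 d) (G.toK0 c) ∧ G.evalC φ d ≠ ⊤},
          G.evalC φ d.1) :
    ∀ c : G.V →₀ ℝ, (∀ a, 0 ≤ c a) →
      G.evalC (psi G I φ) c = ⨆ d : {d : G.V →₀ ℝ //
        (∀ a, 0 ≤ d a) ∧ G.leK (G.toK0 d) (G.toK0 c) ∧ G.evalC (psi G I φ) d ≠ ⊤},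
          G.evalC (psi G I φ) d.1 := by
  intro c hc
  have hψh : G.Harmonic (psi G I φ) := psi_harmonic hφh hI
  rcases eq_or_ne (G.evalC (psi G I φ) c) ⊤ with htop | hne
  · rw [htop]
    symm
    rw [iSup_eq_top]
    intro L hL
    obtain ⟨a, hca, hat⟩ := evalC_eq_top_elim htop
    have hca' : 0 < c a := (hc a).lt_of_ne (Ne.symm hca)
    have hr0 : ENNReal.ofReal (c a) ≠ 0 := (ENNReal.ofReal_pos.mpr hca').ne'
    have hrT : ENNReal.ofReal (c a) ≠ ⊤ := ENNReal.ofReal_ne_top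
    by_cases hSfin : ∀ N, SN G I φ N a ≠ ⊤
    · -- all level sums finite: approximate by the level sums themselves
      have hsupT : (⨆ N, SN G I φ N a) = ⊤ := hat
      obtain ⟨N, hN⟩ := iSup_eq_top.mp hsupT (L / ENNReal.ofReal (c a))
        (ENNReal.div_lt_top hL.ne hr0)
      set N' := max N (G.lvl a) with hN'def
      have hSN' : L / ENNReal.ofReal (c a) < SN G I φ N' a :=
        lt_of_lt_of_le hN (SN_monotone hφh hI a (le_max_left _ _))
      have hdnn : ∀ v, 0 ≤ (c a • dI G I N' a) v :=
        smul_nonneg' (le_of_lt hca') (dI_nonneg I N' a)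
      have hle : G.leK (G.toK0 (c a • dI G I N' a)) (G.toK0 c) := by
        apply leK_trans (y := G.toK0 (c a • Finsupp.single a (1:ℝ)))
        · rw [map_smul, map_smul]
          exact leK_smul (le_of_lt hca') (leK_dI (le_max_right _ _))
        · exact leK_single_self hc a
      have heval : G.evalC (psi G I φ) (c a • dI G I N' a)
          = ENNReal.ofReal (c a) * SN G I φ N' a := by
        rw [evalC_smul _ (le_of_lt hca'), evalC_dI_psi hφh]
      refine ⟨⟨_, hdnn, hle, ?_⟩, ?_⟩
      · rw [heval]; exact ENNReal.mul_ne_top hrT (hSfin N')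
      · show L < G.evalC (psi G I φ) (c a • dI G I N' a)
        rw [heval]
        calc L = ENNReal.ofReal (c a) * (L / ENNReal.ofReal (c a)) :=
              (ENNReal.mul_div_cancel hr0 hrT).symm
          _ < ENNReal.ofReal (c a) * SN G I φ N' a :=
              (ENNReal.mul_lt_mul_iff_right hr0 hrT).mpr hSN'
    · -- some level sum infinite: go through an infinite vertex of the ideal
      push_neg at hSfin
      obtain ⟨N, hSN⟩ := hSfin
      obtain ⟨μ1, hμ1mem, hμ1t⟩ := ENNReal.sum_eq_top.mp hSN
      have hμ1I : μ1 ∈ I := (Finset.mem_filter.mp hμ1mem).2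
      have hμ1lvl : G.lvl μ1 = N := mem_lvlF.mp (Finset.mem_filter.mp hμ1mem).1
      have hμ1top : φ μ1 = ⊤ := by
        rcases ENNReal.mul_eq_top.mp hμ1t with ⟨-, h2⟩ | ⟨h1, -⟩
        · exact h2
        · exact absurd h1 ENNReal.ofReal_ne_top
      have hdim : G.dim a μ1 ≠ 0 := by
        intro h
        rcases ENNReal.mul_eq_top.mp hμ1t with ⟨h2, -⟩ | ⟨h1, -⟩
        · exact h2 (by rw [h, ENNReal.ofReal_zero])
        · exact absurd h1 ENNReal.ofReal_ne_top
      have hlvlle : G.lvl a ≤ G.lvl μ1 := by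
        by_contra hlt
        push_neg at hlt
        apply hdim
        rw [GradedGraph.dim, show G.lvl μ1 - G.lvl a = 0 by omega]
        apply dimAux_zero_ne
        intro h
        rw [h] at hlt
        omega
      set m := G.lvl μ1 - G.lvl a with hmdef
      have hlvl' : G.lvl μ1 = G.lvl a + m := by omega
      have hdimAux : G.dim a μ1 = G.dimAux m a μ1 := dim_eq_dimAux hlvl'
      have hdimpos : 0 < G.dim a μ1 := (dim_nonneg a μ1).lt_of_ne (Ne.symm hdim)
      set s := c a * G.dim a μ1 with hsdef
      have hspos : 0 < s := mul_pos hca' hdimpos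
      have hs0 : ENNReal.ofReal s ≠ 0 := (ENNReal.ofReal_pos.mpr hspos).ne'
      have hsT : ENNReal.ofReal s ≠ ⊤ := ENNReal.ofReal_ne_top
      obtain ⟨d0, hd0nn, hd0supp, hd0le, hd0gt, hd0fin⟩ :=
        approx hφh hI hsup hμ1I hμ1top
          (L := L / ENNReal.ofReal s) (ENNReal.div_lt_top hL.ne hs0).ne
      have hevalI : G.evalC (psi G I φ) d0 = G.evalC φ d0 :=
        evalC_congr fun v hv => psi_eq_on_I hφh (hd0supp v hv).1
      have hdnn : ∀ v, 0 ≤ (s • d0) v := smul_nonneg' (le_of_lt hspos) hd0nn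
      have hle : G.leK (G.toK0 (s • d0)) (G.toK0 c) := by
        apply leK_trans (y := G.toK0 (c a • Finsupp.single a (1:ℝ)))
        · rw [map_smul, map_smul]
          have h1 : G.leK (s • G.toK0 d0) (s • G.vtx μ1) := leK_smul (le_of_lt hspos) hd0le
          apply leK_trans h1
          have h2 : G.leK (G.dim a μ1 • G.vtx μ1) (G.vtx a) := by
            have := leK_dim_single (G := G) hlvl'
            rwa [map_smul, ← hdimAux] at this
          have h3 := leK_smul (le_of_lt hca') h2
          have h4 : s • G.vtx μ1 = c a • (G.dim a μ1 • G.vtx μ1) := by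
            rw [smul_smul, hsdef]
          rw [h4]
          rwa [GradedGraph.vtx, ← map_smul] at h3
        · exact leK_single_self hc a
      have heval : G.evalC (psi G I φ) (s • d0)
          = ENNReal.ofReal s * G.evalC φ d0 := by
        rw [evalC_smul _ (le_of_lt hspos), hevalI]
      refine ⟨⟨_, hdnn, hle, ?_⟩, ?_⟩
      · rw [heval]; exact ENNReal.mul_ne_top hsT hd0fin
      · show L < G.evalC (psi G I φ) (s • d0)
        rw [heval]
        calc L = ENNReal.ofReal s * (L / ENNReal.ofReal s) :=
              (ENNReal.mul_div_cancel hs0 hsT).symm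
          _ < ENNReal.ofReal s * G.evalC φ d0 :=
              (ENNReal.mul_lt_mul_iff_right hs0 hsT).mpr hd0gt
  · apply le_antisymm
    · exact le_iSup_of_le ⟨c, hc, leK_refl _, hne⟩ le_rfl
    · exact iSup_le fun d => eval_mono (psi G I φ) hψh hc d.2.1 d.2.2.1

end GradedGraph

end AuxProof4


/-- for an indecomposable finite or semifinite harmonic function `φ` not
vanishing identically on an ideal `I`,
`φ(λ) = lim_N Σ_{μ ∈ I, |μ|=N} dim(λ,μ)φ(μ)` for all `λ`. -/
theorem indecomposable_limit_on_ideal (G : GradedGraph) (I : Set G.V)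
    (hI : G.IsIdeal I) (φ : G.V → ℝ≥0∞) (hφ : G.Indecomposable φ)
    (h0 : ∃ μ ∈ I, φ μ ≠ 0) :
    ∀ lam : G.V,
      Tendsto (fun N => ∑ᶠ μ ∈ {μ : G.V | μ ∈ I ∧ G.lvl μ = N},
          ENNReal.ofReal (G.dim lam μ) * φ μ)
        atTop (𝓝 (φ lam)) := by
  classical
  have hφh : G.Harmonic φ := by
    rcases hφ.1 with h | h
    exacts [h.1, h.1]
  have hψh : G.Harmonic (GradedGraph.psi G I φ) := GradedGraph.psi_harmonic hφh hI
  have hψle : ∀ a, GradedGraph.psi G I φ a ≤ φ a := GradedGraph.psi_le hφh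
  have key : ∀ a, GradedGraph.psi G I φ a = φ a := by
    by_cases hfin : ∀ a, φ a ≠ ⊤
    · obtain ⟨μ0, hμ0I, hμ00⟩ := h0
      have hfs : G.FinOrSemifinite (GradedGraph.psi G I φ) :=
        Or.inl ⟨hψh, fun a => ne_top_of_le_ne_top (hfin a) (hψle a)⟩
      obtain ⟨C, hC⟩ := hφ.2.2 (GradedGraph.psi G I φ) hfs hψle
        ⟨μ0, hfin μ0, by rw [GradedGraph.psi_eq_on_I hφh hμ0I]; exact hμ00⟩
      have hCeq : C = 1 := by
        apply GradedGraph.C_eq_one hμ00 (hfin μ0)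
        rw [← hC μ0 (hfin μ0), GradedGraph.psi_eq_on_I hφh hμ0I]
      intro a
      rw [hC a (hfin a), hCeq, one_mul]
    · have hsf : G.Semifinite φ := by
        rcases hφ.1 with h | h
        · exact absurd h.2 hfin
        · exact h
      have hsup := hsf.2.2
      obtain ⟨μs, hμsI, hμs0, hμsT⟩ := GradedGraph.mustar hφh hI hsup h0
      have hfs : G.FinOrSemifinite (GradedGraph.psi G I φ) := by
        by_cases hψfin : ∀ a, GradedGraph.psi G I φ a ≠ ⊤
        · exact Or.inl ⟨hψh, hψfin⟩
        · push_neg at hψfin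
          exact Or.inr ⟨hψh, hψfin, GradedGraph.psi_supcond hφh hI hsup⟩
      obtain ⟨C, hC⟩ := hφ.2.2 (GradedGraph.psi G I φ) hfs hψle
        ⟨μs, hμsT, by rw [GradedGraph.psi_eq_on_I hφh hμsI]; exact hμs0⟩
      have hCeq : C = 1 := by
        apply GradedGraph.C_eq_one hμs0 hμsT
        rw [← hC μs hμsT, GradedGraph.psi_eq_on_I hφh hμsI]
      have heqJ : ∀ a, φ a ≠ ⊤ → GradedGraph.psi G I φ a = φ a := fun a ha => by
        rw [hC a ha, hCeq, one_mul]
      intro a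
      by_cases ha : φ a = ⊤
      · rw [ha]
        exact GradedGraph.psi_top hφh hI hsup heqJ ha
      · exact heqJ a ha
  intro lam
  have hmono : Monotone fun N => GradedGraph.SN G I φ N lam :=
    GradedGraph.SN_monotone hφh hI lam
  have htend := tendsto_atTop_iSup hmono
  have hfun : (fun N => ∑ᶠ μ ∈ {μ : G.V | μ ∈ I ∧ G.lvl μ = N},
      ENNReal.ofReal (G.dim lam μ) * φ μ) = fun N => GradedGraph.SN G I φ N lam :=
    funext fun N => GradedGraph.SN_eq I φ N lam
  rw [hfun]
  have hlim : (⨆ N, GradedGraph.SN G I φ N lam) = φ lam := key lam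
  rwa [hlim] at htend
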